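/- arXiv:2212.13436 — 3 statements merged into one kernel-verified Lean document; each statement's English description precedes it below -/
import Mathlib

section
/- Let 𝒜 be an associative ℂ-algebra generated by a subspace 𝒱 ⊆ 𝒜, and suppose the map v ↦ -v on 𝒱 extends to an algebra anti-automorphism S of 𝒜. Let f₀ : 𝒜 → ℬ₀ and f₁ : 𝒜 → ℬ₁ be algebra homomorphisms with f₁ surjective, and let ℐ = ker f₁. Define f₂ : 𝒱 → ℬ₀ ⊗ ℬ₁ by f₂(v) = f₀(v) ⊗ 1 + 1 ⊗ f₁(v). Then the linear map ℬ₀ → ℬ₀ ⊗ ℬ₁, b ↦ b ⊗ 1, induces a vector space isomorphism ℬ₀/(ℬ₀ · f₀(S(ℐ))) ≅ (ℬ₀ ⊗ ℬ₁)/((ℬ₀ ⊗ ℬ₁) · f₂(𝒱)). -/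
open TensorProduct

/-!
For every `a`, `f₀ (S a) ⊗ 1 ≡ 1 ⊗ f₁ a` modulo the left ideal generated by `f₂(𝒱)`: on `v ∈ 𝒱`
this is `S v = -v`, and it propagates to products because `S` reverses them while the two tensor
factors commute. Hence `b ⊗ 1` vanishes modulo `f₂(𝒱)` for `b ∈ ℬ₀ · f₀(S(ℐ))`, and every
`b ⊗ f₁ a` is congruent to `b f₀ (S a) ⊗ 1`. The inverse map is `b ⊗ f₁ a ↦ [b f₀ (S a)]`, which
is well defined because `ℐ` is sent into `ℬ₀ · f₀(S(ℐ))`, and kills `f₂(𝒱)` again by `S v = -v`.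
-/

theorem Submodule.restrictScalars_span_le_ker_of_map_mul_eq_zero {R M P : Type*} [CommSemiring R]
    [Semiring M] [Algebra R M] [AddCommMonoid P] [Module R P] {s : Set M} {q : M →ₗ[R] P}
    (h : ∀ r, ∀ t ∈ s, q (r * t) = 0) :
    (span M s).restrictScalars R ≤ LinearMap.ker q := by
  intro u hu
  suffices ∀ r, q (r * u) = 0 by simpa using this 1
  induction hu using Submodule.span_induction with
  | mem t ht => exact fun r => h r t ht
  | zero => simp
  | add x y _ _ hx hy => simp [mul_add, hx, hy]
  | smul c x _ hx => exact fun r => by simpa [mul_assoc] using hx (r * c)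

section

variable {R A B₀ B₁ : Type*} [CommRing R] [Ring A] [Algebra R A] [Ring B₀] [Algebra R B₀]
  [Ring B₁] [Algebra R B₁] (S : A →ₗ[R] A) (f₀ : A →ₐ[R] B₀) (f₁ : A →ₐ[R] B₁)

def twistedKerIdeal : Ideal B₀ := Ideal.span (f₀ '' (S '' {a | f₁ a = 0}))

def diagonalIdeal (𝒱 : Submodule R A) : Ideal (B₀ ⊗[R] B₁) :=
  Ideal.span {t | ∃ v ∈ 𝒱, t = f₀ v ⊗ₜ[R] (1 : B₁) + (1 : B₀) ⊗ₜ[R] f₁ v}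

variable {S f₀ f₁}

theorem tmul_one_sub_one_tmul_mem_diagonalIdeal {𝒱 : Submodule R A}
    (hgen : Algebra.adjoin R (𝒱 : Set A) = ⊤) (hS1 : S 1 = 1)
    (hSmul : ∀ a b : A, S (a * b) = S b * S a) (hSV : ∀ v ∈ 𝒱, S v = -v) (a : A) :
    f₀ (S a) ⊗ₜ[R] (1 : B₁) - (1 : B₀) ⊗ₜ[R] f₁ a ∈ diagonalIdeal f₀ f₁ 𝒱 := by
  have ha : a ∈ Algebra.adjoin R (𝒱 : Set A) := hgen ▸ Algebra.mem_top
  induction ha using Algebra.adjoin_induction with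
  | mem v hv =>
    rw [hSV v hv, map_neg, neg_tmul, ← neg_add']
    exact neg_mem (Ideal.subset_span ⟨v, hv, rfl⟩)
  | algebraMap r =>
    rw [Algebra.algebraMap_eq_smul_one, map_smul, hS1, map_smul, map_smul, map_one, map_one,
      smul_tmul, sub_self]
    exact zero_mem _
  | add x y _ _ hx hy =>
    simpa only [map_add, add_tmul, tmul_add, add_sub_add_comm] using add_mem hx hy
  | mul x y _ _ hx hy =>
    -- `f₀ (S y) ⊗ 1` and `1 ⊗ f₁ x` commute, so the difference splits along `S (x y) = S y S x`.
    have split : f₀ (S (x * y)) ⊗ₜ[R] (1 : B₁) - (1 : B₀) ⊗ₜ[R] f₁ (x * y) =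
        f₀ (S y) ⊗ₜ[R] (1 : B₁) * (f₀ (S x) ⊗ₜ[R] (1 : B₁) - (1 : B₀) ⊗ₜ[R] f₁ x) +
          (1 : B₀) ⊗ₜ[R] f₁ x * (f₀ (S y) ⊗ₜ[R] (1 : B₁) - (1 : B₀) ⊗ₜ[R] f₁ y) := by
      simp only [mul_sub, Algebra.TensorProduct.tmul_mul_tmul, hSmul, map_mul, mul_one, one_mul]
      abel
    rw [split]
    exact add_mem (Ideal.mul_mem_left _ _ hx) (Ideal.mul_mem_left _ _ hy)

theorem twistedKerIdeal_le_comap_diagonalIdeal {𝒱 : Submodule R A}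
    (hgen : Algebra.adjoin R (𝒱 : Set A) = ⊤) (hS1 : S 1 = 1)
    (hSmul : ∀ a b : A, S (a * b) = S b * S a) (hSV : ∀ v ∈ 𝒱, S v = -v) :
    twistedKerIdeal S f₀ f₁ ≤
      (diagonalIdeal f₀ f₁ 𝒱).comap (Algebra.TensorProduct.includeLeft (S := R) (B := B₁)) := by
  refine Ideal.span_le.mpr ?_
  rintro _ ⟨_, ⟨a, ha : f₁ a = 0, rfl⟩, rfl⟩
  simpa [ha] using
    tmul_one_sub_one_tmul_mem_diagonalIdeal (f₀ := f₀) (f₁ := f₁) hgen hS1 hSmul hSV a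

variable (S f₀ f₁) in
def rightMulTwistedQuot : A →ₗ[R] B₀ →ₗ[R] B₀ ⧸ (twistedKerIdeal S f₀ f₁).restrictScalars R :=
  (LinearMap.llcomp R B₀ B₀ _ (Submodule.mkQ _) ∘ₗ (LinearMap.mul R B₀).flip) ∘ₗ
    f₀.toLinearMap ∘ₗ S

theorem rightMulTwistedQuot_apply (a : A) (b : B₀) :
    rightMulTwistedQuot S f₀ f₁ a b = Submodule.Quotient.mk (b * f₀ (S a)) := rfl

theorem ker_le_ker_rightMulTwistedQuot :
    LinearMap.ker f₁.toLinearMap ≤ LinearMap.ker (rightMulTwistedQuot S f₀ f₁) := by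
  intro a ha
  ext b
  rw [LinearMap.zero_apply, rightMulTwistedQuot_apply, Submodule.Quotient.mk_eq_zero]
  exact Ideal.mul_mem_left _ b (Ideal.subset_span ⟨S a, ⟨a, ha, rfl⟩, rfl⟩)

variable (S f₀) in
noncomputable def tensorToTwistedQuot (hf₁ : Function.Surjective f₁) :
    B₀ ⊗[R] B₁ →ₗ[R] B₀ ⧸ (twistedKerIdeal S f₀ f₁).restrictScalars R :=
  TensorProduct.lift <| LinearMap.flip <|
    (LinearMap.ker f₁.toLinearMap).liftQ _ ker_le_ker_rightMulTwistedQuot ∘ₗ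
      (f₁.toLinearMap.quotKerEquivOfSurjective hf₁).symm.toLinearMap

theorem tensorToTwistedQuot_tmul (hf₁ : Function.Surjective f₁) (b : B₀) (a : A) :
    tensorToTwistedQuot S f₀ hf₁ (b ⊗ₜ f₁ a) = Submodule.Quotient.mk (b * f₀ (S a)) := by
  have : (f₁.toLinearMap.quotKerEquivOfSurjective hf₁).symm (f₁ a) = Submodule.Quotient.mk a :=
    (LinearEquiv.symm_apply_eq _).mpr rfl
  simp [tensorToTwistedQuot, this, rightMulTwistedQuot_apply]

theorem tensorToTwistedQuot_mul_one_tmul (hf₁ : Function.Surjective f₁)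
    (hSmul : ∀ a b : A, S (a * b) = S b * S a) (r : B₀ ⊗[R] B₁) (x : A) :
    tensorToTwistedQuot S f₀ hf₁ (r * (1 : B₀) ⊗ₜ[R] f₁ x) =
      tensorToTwistedQuot S f₀ hf₁ (r * f₀ (S x) ⊗ₜ[R] (1 : B₁)) := by
  induction r using TensorProduct.induction_on with
  | zero => simp
  | add r r' hr hr' => simp only [add_mul, map_add, hr, hr']
  | tmul b c =>
    obtain ⟨a, rfl⟩ := hf₁ c
    simp only [Algebra.TensorProduct.tmul_mul_tmul, mul_one, ← map_mul,
      tensorToTwistedQuot_tmul, hSmul, mul_assoc]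

theorem diagonalIdeal_le_ker_tensorToTwistedQuot {𝒱 : Submodule R A}
    (hf₁ : Function.Surjective f₁) (hSmul : ∀ a b : A, S (a * b) = S b * S a)
    (hSV : ∀ v ∈ 𝒱, S v = -v) :
    (diagonalIdeal f₀ f₁ 𝒱).restrictScalars R ≤
      LinearMap.ker (tensorToTwistedQuot S f₀ hf₁) := by
  refine Submodule.restrictScalars_span_le_ker_of_map_mul_eq_zero ?_
  rintro r _ ⟨v, hv, rfl⟩
  rw [mul_add, map_add, tensorToTwistedQuot_mul_one_tmul hf₁ hSmul, hSV v hv, ← map_add,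
    ← mul_add, map_neg, neg_tmul, add_neg_cancel, mul_zero, map_zero]

variable (S f₀ f₁) in
noncomputable def quotientTwistedKerEquiv (𝒱 : Submodule R A)
    (hgen : Algebra.adjoin R (𝒱 : Set A) = ⊤) (hS1 : S 1 = 1) (hSmul : ∀ a b : A, S (a * b) = S b * S a) (hSV : ∀ v ∈ 𝒱, S v = -v)
    (hf₁ : Function.Surjective f₁) :
    (B₀ ⧸ (twistedKerIdeal S f₀ f₁).restrictScalars R) ≃ₗ[R]
      (B₀ ⊗[R] B₁) ⧸ (diagonalIdeal f₀ f₁ 𝒱).restrictScalars R :=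
  LinearEquiv.ofLinearMap
    (Submodule.liftQ _ (Submodule.mkQ _ ∘ₗ
      (Algebra.TensorProduct.includeLeft (S := R) (B := B₁)).toLinearMap) fun b hb => by
        simpa [Submodule.Quotient.mk_eq_zero] using
          twistedKerIdeal_le_comap_diagonalIdeal hgen hS1 hSmul hSV hb)
    (Submodule.liftQ _ _ (diagonalIdeal_le_ker_tensorToTwistedQuot hf₁ hSmul hSV))
    (by
      refine Submodule.linearMap_qext _ (TensorProduct.ext' fun b c => ?_)
      obtain ⟨a, rfl⟩ := hf₁ c
      simp only [LinearMap.comp_apply, Submodule.mkQ_apply, Submodule.liftQ_apply,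
        tensorToTwistedQuot_tmul, LinearMap.id_apply, Submodule.Quotient.eq]
      have h := Ideal.mul_mem_left _ (b ⊗ₜ[R] (1 : B₁))
        (tmul_one_sub_one_tmul_mem_diagonalIdeal (f₀ := f₀) (f₁ := f₁) hgen hS1 hSmul hSV a)
      simpa [mul_sub, Algebra.TensorProduct.tmul_mul_tmul] using h)
    (by
      refine Submodule.linearMap_qext _ (LinearMap.ext fun b => ?_)
      have h := tensorToTwistedQuot_tmul (S := S) (f₀ := f₀) hf₁ b 1
      rw [map_one, hS1, map_one, mul_one] at h
      simpa using h)

end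

theorem stmt3_general (A B0 B1 : Type*) [Ring A] [Algebra ℂ A] [Ring B0] [Algebra ℂ B0]
    [Ring B1] [Algebra ℂ B1]
    (𝒱 : Submodule ℂ A) (hgen : Algebra.adjoin ℂ (𝒱 : Set A) = ⊤)
    (S : A →ₗ[ℂ] A) (hS1 : S 1 = 1)
    (hSmul : ∀ a b : A, S (a * b) = S b * S a)
    (hSV : ∀ v ∈ 𝒱, S v = -v)
    (f0 : A →ₐ[ℂ] B0) (f1 : A →ₐ[ℂ] B1) (hf1 : Function.Surjective f1) :
    ∃ g : (B0 ⧸ (Submodule.span B0 (⇑f0 '' (⇑S '' {a : A | f1 a = 0}))).restrictScalars ℂ)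
        ≃ₗ[ℂ]
        ((B0 ⊗[ℂ] B1) ⧸ (Submodule.span (B0 ⊗[ℂ] B1)
          {t : B0 ⊗[ℂ] B1 | ∃ v ∈ 𝒱,
            t = f0 v ⊗ₜ[ℂ] (1 : B1) + (1 : B0) ⊗ₜ[ℂ] f1 v}).restrictScalars ℂ),
      ∀ b : B0, g (Submodule.Quotient.mk b) = Submodule.Quotient.mk (b ⊗ₜ[ℂ] (1 : B1)) :=
  ⟨quotientTwistedKerEquiv S f0 f1 𝒱 hgen hS1 hSmul hSV hf1, fun _ => rfl⟩

/-- Let `𝒜` be a ℂ-algebra generated by a subspace `𝒱`, `S` an algebra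
anti-automorphism of `𝒜` with `S v = -v` for `v ∈ 𝒱`, `f₀ : 𝒜 → ℬ₀`, `f₁ : 𝒜 → ℬ₁`
algebra maps with `f₁` surjective, `ℐ = ker f₁`.  Then `b ↦ b ⊗ 1` induces a linear
isomorphism `ℬ₀/(ℬ₀ · f₀(S(ℐ))) ≅ (ℬ₀ ⊗ ℬ₁)/((ℬ₀ ⊗ ℬ₁) · f₂(𝒱))`, where
`f₂(v) = f₀(v) ⊗ 1 + 1 ⊗ f₁(v)`. -/
theorem stmt3 (A B0 B1 : Type*) [Ring A] [Algebra ℂ A] [Ring B0] [Algebra ℂ B0]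
    [Ring B1] [Algebra ℂ B1]
    (𝒱 : Submodule ℂ A) (hgen : Algebra.adjoin ℂ (𝒱 : Set A) = ⊤)
    (S : A →ₗ[ℂ] A) (hSbij : Function.Bijective S) (hS1 : S 1 = 1)
    (hSmul : ∀ a b : A, S (a * b) = S b * S a)
    (hSV : ∀ v ∈ 𝒱, S v = -v)
    (f0 : A →ₐ[ℂ] B0) (f1 : A →ₐ[ℂ] B1) (hf1 : Function.Surjective f1) :
    ∃ g : (B0 ⧸ (Submodule.span B0 (⇑f0 '' (⇑S '' {a : A | f1 a = 0}))).restrictScalars ℂ)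
        ≃ₗ[ℂ]
        ((B0 ⊗[ℂ] B1) ⧸ (Submodule.span (B0 ⊗[ℂ] B1)
          {t : B0 ⊗[ℂ] B1 | ∃ v ∈ 𝒱,
            t = f0 v ⊗ₜ[ℂ] (1 : B1) + (1 : B0) ⊗ₜ[ℂ] f1 v}).restrictScalars ℂ),
      ∀ b : B0, g (Submodule.Quotient.mk b) = Submodule.Quotient.mk (b ⊗ₜ[ℂ] (1 : B1)) :=
  stmt3_general A B0 B1 𝒱 hgen S hS1 hSmul hSV f0 f1 hf1
end

section
/- With the hypotheses of the previous setup (𝒜 generated by 𝒱, anti-automorphism S with S(v) = -v on 𝒱, algebra maps f₀, f₁, and f₂(v) = f₀(v)⊗1 + 1⊗f₁(v)), for every a ∈ 𝒜 one has f₀(a) ⊗ 1 ≡ 1 ⊗ f₁(S(a)) modulo the left ideal (ℬ₀ ⊗ ℬ₁) · f₂(𝒱). -/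
open TensorProduct

/-- With `𝒜` generated by `𝒱`, `S` an anti-automorphism with `S v = -v`
on `𝒱`, and algebra maps `f₀, f₁`, for every `a ∈ 𝒜` we have
`f₀(a) ⊗ 1 ≡ 1 ⊗ f₁(S(a))` modulo the left ideal `(ℬ₀ ⊗ ℬ₁) · f₂(𝒱)`,
where `f₂(v) = f₀(v) ⊗ 1 + 1 ⊗ f₁(v)`. -/
theorem stmt4 (A B0 B1 : Type*) [Ring A] [Algebra ℂ A] [Ring B0] [Algebra ℂ B0]
    [Ring B1] [Algebra ℂ B1]
    (𝒱 : Submodule ℂ A) (hgen : Algebra.adjoin ℂ (𝒱 : Set A) = ⊤)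
    (S : A →ₗ[ℂ] A) (hSbij : Function.Bijective S) (hS1 : S 1 = 1)
    (hSmul : ∀ a b : A, S (a * b) = S b * S a)
    (hSV : ∀ v ∈ 𝒱, S v = -v)
    (f0 : A →ₐ[ℂ] B0) (f1 : A →ₐ[ℂ] B1) (a : A) :
    f0 a ⊗ₜ[ℂ] (1 : B1) - (1 : B0) ⊗ₜ[ℂ] f1 (S a) ∈
      Submodule.span (B0 ⊗[ℂ] B1)
        {t : B0 ⊗[ℂ] B1 | ∃ v ∈ 𝒱,
          t = f0 v ⊗ₜ[ℂ] (1 : B1) + (1 : B0) ⊗ₜ[ℂ] f1 v} := by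
  set I := Submodule.span (B0 ⊗[ℂ] B1)
        {t : B0 ⊗[ℂ] B1 | ∃ v ∈ 𝒱,
          t = f0 v ⊗ₜ[ℂ] (1 : B1) + (1 : B0) ⊗ₜ[ℂ] f1 v} with hI
  have ha : a ∈ Algebra.adjoin ℂ (𝒱 : Set A) := hgen ▸ Algebra.mem_top
  induction ha using Algebra.adjoin_induction with
  | mem v hv =>
      have : f0 v ⊗ₜ[ℂ] (1 : B1) - (1 : B0) ⊗ₜ[ℂ] f1 (S v)
          = f0 v ⊗ₜ[ℂ] (1 : B1) + (1 : B0) ⊗ₜ[ℂ] f1 v := by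
        rw [hSV v hv, map_neg, TensorProduct.tmul_neg, sub_neg_eq_add]
      rw [this]
      exact Submodule.subset_span ⟨v, hv, rfl⟩
  | algebraMap r =>
      have h1 : S (algebraMap ℂ A r) = algebraMap ℂ A r := by
        rw [Algebra.algebraMap_eq_smul_one, map_smul, hS1]
      rw [h1]
      have : (f0 (algebraMap ℂ A r)) ⊗ₜ[ℂ] (1 : B1) = (1 : B0) ⊗ₜ[ℂ] f1 (algebraMap ℂ A r) := by
        rw [AlgHom.commutes, AlgHom.commutes, Algebra.algebraMap_eq_smul_one,
          Algebra.algebraMap_eq_smul_one, TensorProduct.smul_tmul]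
      rw [this, sub_self]
      exact zero_mem _
  | add x y hx hy ihx ihy =>
      have := add_mem ihx ihy
      convert this using 1
      rw [map_add, map_add, map_add, TensorProduct.add_tmul, TensorProduct.tmul_add]
      abel
  | mul x y hx hy ihx ihy =>
      have key : f0 (x * y) ⊗ₜ[ℂ] (1 : B1) - (1 : B0) ⊗ₜ[ℂ] f1 (S (x * y))
          = (f0 x ⊗ₜ[ℂ] (1 : B1)) * (f0 y ⊗ₜ[ℂ] (1 : B1) - (1 : B0) ⊗ₜ[ℂ] f1 (S y))
            + ((1 : B0) ⊗ₜ[ℂ] f1 (S y)) * (f0 x ⊗ₜ[ℂ] (1 : B1) - (1 : B0) ⊗ₜ[ℂ] f1 (S x)) := by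
        rw [hSmul, map_mul, map_mul]
        simp [mul_sub, Algebra.TensorProduct.tmul_mul_tmul, sub_add_sub_cancel]
      rw [key]
      exact add_mem (Submodule.smul_mem _ _ ihy) (Submodule.smul_mem _ _ ihx)
end

section
/- The map Θ₁ : sp₂ₙ(ℂ) → W₂ₙ sending the block matrix ((A,B),(C,-Aᵀ)) (with B = Bᵀ, C = Cᵀ) to (1/2)(∑_{i,j=1}^n (2a_{ij} xᵢyⱼ + b_{ij} xᵢxⱼ - c_{ij} yᵢyⱼ) + Tr(A)) is a Lie algebra homomorphism from sp₂ₙ(ℂ) to the Weyl algebra W₂ₙ with commutator bracket. -/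
/-- Defining relations of the Weyl algebra `W₂ₙ`. -/
inductive WeylRel (n : ℕ) :
    FreeAlgebra ℂ (Fin n ⊕ Fin n) → FreeAlgebra ℂ (Fin n ⊕ Fin n) → Prop
  | xx (i j : Fin n) : WeylRel n
      (FreeAlgebra.ι ℂ (Sum.inl i) * FreeAlgebra.ι ℂ (Sum.inl j))
      (FreeAlgebra.ι ℂ (Sum.inl j) * FreeAlgebra.ι ℂ (Sum.inl i))
  | yy (i j : Fin n) : WeylRel n
      (FreeAlgebra.ι ℂ (Sum.inr i) * FreeAlgebra.ι ℂ (Sum.inr j))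
      (FreeAlgebra.ι ℂ (Sum.inr j) * FreeAlgebra.ι ℂ (Sum.inr i))
  | yx (i j : Fin n) : WeylRel n
      (FreeAlgebra.ι ℂ (Sum.inr i) * FreeAlgebra.ι ℂ (Sum.inl j))
      (FreeAlgebra.ι ℂ (Sum.inl j) * FreeAlgebra.ι ℂ (Sum.inr i)
        + if i = j then 1 else 0)

/-- The Weyl algebra `W₂ₙ`. -/
abbrev Weyl (n : ℕ) := RingQuot (WeylRel n)

/-- The generator `xᵢ`. -/
noncomputable def wx (n : ℕ) (i : Fin n) : Weyl n :=
  RingQuot.mkAlgHom ℂ (WeylRel n) (FreeAlgebra.ι ℂ (Sum.inl i))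

/-- The generator `yᵢ`. -/
noncomputable def wy (n : ℕ) (i : Fin n) : Weyl n :=
  RingQuot.mkAlgHom ℂ (WeylRel n) (FreeAlgebra.ι ℂ (Sum.inr i))

/-- `M` lies in `sp₂ₙ(ℂ)`: as a block matrix `((A,B),(C,D))` (blocks indexed by
`Sum.inl`/`Sum.inr`), `D = -Aᵀ`, `B = Bᵀ` and `C = Cᵀ`. -/
def inSp (n : ℕ) (M : Matrix (Fin n ⊕ Fin n) (Fin n ⊕ Fin n) ℂ) : Prop :=
  (∀ i j, M (Sum.inr i) (Sum.inr j) = - M (Sum.inl j) (Sum.inl i)) ∧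
  (∀ i j, M (Sum.inl i) (Sum.inr j) = M (Sum.inl j) (Sum.inr i)) ∧
  (∀ i j, M (Sum.inr i) (Sum.inl j) = M (Sum.inr j) (Sum.inl i))

/-- The map `Θ₁ : sp₂ₙ(ℂ) → W₂ₙ`,
`((A,B),(C,-Aᵀ)) ↦ (1/2)(∑ᵢⱼ 2aᵢⱼ xᵢyⱼ + bᵢⱼ xᵢxⱼ − cᵢⱼ yᵢyⱼ + Tr A)`. -/
noncomputable def theta1 (n : ℕ)
    (M : Matrix (Fin n ⊕ Fin n) (Fin n ⊕ Fin n) ℂ) : Weyl n :=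
  (1 / 2 : ℂ) •
    ((∑ i : Fin n, ∑ j : Fin n,
        ((2 * M (Sum.inl i) (Sum.inl j)) • (wx n i * wy n j)
          + (M (Sum.inl i) (Sum.inr j)) • (wx n i * wx n j)
          - (M (Sum.inr i) (Sum.inl j)) • (wy n i * wy n j)))
      + (∑ i : Fin n, M (Sum.inl i) (Sum.inl i)) • (1 : Weyl n))


noncomputable def zgen (n : ℕ) : (Fin n ⊕ Fin n) → Weyl n := Sum.elim (wx n) (wy n)

def om {n : ℕ} : (Fin n ⊕ Fin n) → (Fin n ⊕ Fin n) → ℂ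
  | .inl i, .inr j => if i = j then -1 else 0
  | .inr i, .inl j => if i = j then 1 else 0
  | _, _ => 0

lemma rel_xx (n : ℕ) (i j : Fin n) : wx n i * wx n j = wx n j * wx n i := by
  rw [wx, wx, ← map_mul, ← map_mul]
  exact RingQuot.mkAlgHom_rel ℂ (WeylRel.xx i j)

lemma rel_yy (n : ℕ) (i j : Fin n) : wy n i * wy n j = wy n j * wy n i := by
  rw [wy, wy, ← map_mul, ← map_mul]
  exact RingQuot.mkAlgHom_rel ℂ (WeylRel.yy i j)

lemma rel_yx (n : ℕ) (i j : Fin n) :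
    wy n i * wx n j = wx n j * wy n i + (if i = j then (1:ℂ) else 0) • 1 := by
  have h := RingQuot.mkAlgHom_rel ℂ (WeylRel.yx i j)
  rw [map_mul] at h
  rw [wy, wx, h, map_add, map_mul]
  congr 1
  split <;> simp

lemma comm_z (n : ℕ) (p q : Fin n ⊕ Fin n) :
    zgen n p * zgen n q = zgen n q * zgen n p + om p q • 1 := by
  rcases p with i | i <;> rcases q with j | j <;>
    simp only [zgen, Sum.elim_inl, Sum.elim_inr, om]
  · rw [rel_xx]; simp
  · have h := rel_yx n j i
    have h2 : wx n i * wy n j = wy n j * wx n i - (if j = i then (1:ℂ) else 0) • 1 := by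
      rw [h]; abel
    rw [h2]
    by_cases hij : i = j <;> simp [hij, eq_comm, sub_eq_add_neg, neg_smul] <;> module
  · rw [rel_yx]
  · rw [rel_yy]; simp

lemma quad_comm {A : Type} [Ring A] [Algebra ℂ A] (a b c d : A) (α β γ δ : ℂ)
    (hbc : b * c = c * b + β • 1) (hac : a * c = c * a + α • 1)
    (hbd : b * d = d * b + δ • 1) (had : a * d = d * a + γ • 1) :
    a * b * (c * d) - c * d * (a * b)
      = β • (a * d) + δ • (a * c) + α • (d * b) + γ • (c * b) := by
  have e1 : a * b * (c * d) = a * (b * c) * d := by noncomm_ring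
  rw [e1, hbc]
  have e2 : a * (c * b + β • 1) * d = (a * c) * (b * d) + β • (a * d) := by
    simp only [mul_add, add_mul, mul_smul_comm, smul_mul_assoc, mul_one, one_mul]
    noncomm_ring
  rw [e2, hac, hbd]
  have e3 : (c * a + α • 1) * (d * b + δ • 1)
      = c * (a * d) * b + δ • (c * a) + α • (d * b) + (α * δ) • 1 := by
    simp only [mul_add, add_mul, mul_smul_comm, smul_mul_assoc, mul_one, one_mul, smul_smul,
      smul_add, mul_assoc]
    module
  rw [e3, had]
  have e4 : c * a = a * c - α • 1 := by rw [hac]; abel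
  rw [e4]
  have e5 : c * (d * a + γ • 1) * b = c * d * (a * b) + γ • (c * b) := by
    simp only [mul_add, add_mul, mul_smul_comm, smul_mul_assoc, mul_one, one_mul]
    noncomm_ring
  rw [e5]
  simp only [smul_sub, smul_smul]
  module

noncomputable def Zq (n : ℕ) (t : (Fin n ⊕ Fin n) × (Fin n ⊕ Fin n)) : Weyl n :=
  zgen n t.1 * zgen n t.2

lemma comm_Z (n : ℕ) (t u : (Fin n ⊕ Fin n) × (Fin n ⊕ Fin n)) :
    Zq n t * Zq n u - Zq n u * Zq n t
      = om t.2 u.1 • (zgen n t.1 * zgen n u.2) + om t.2 u.2 • (zgen n t.1 * zgen n u.1)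
        + om t.1 u.1 • (zgen n u.2 * zgen n t.2) + om t.1 u.2 • (zgen n u.1 * zgen n t.2) :=
  quad_comm (zgen n t.1) (zgen n t.2) (zgen n u.1) (zgen n u.2)
    (om t.1 u.1) (om t.2 u.1) (om t.1 u.2) (om t.2 u.2)
    (comm_z n t.2 u.1) (comm_z n t.1 u.1) (comm_z n t.2 u.2) (comm_z n t.1 u.2)

noncomputable def Sf (n : ℕ) (f : (Fin n ⊕ Fin n) → (Fin n ⊕ Fin n) → ℂ) : Weyl n :=
  ∑ t : (Fin n ⊕ Fin n) × (Fin n ⊕ Fin n), f t.1 t.2 • Zq n t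

lemma Sf_bracket (n : ℕ) (f g : (Fin n ⊕ Fin n) → (Fin n ⊕ Fin n) → ℂ) :
    Sf n f * Sf n g - Sf n g * Sf n f
      = ∑ t : (Fin n ⊕ Fin n) × (Fin n ⊕ Fin n),
        ∑ u : (Fin n ⊕ Fin n) × (Fin n ⊕ Fin n),
          (f t.1 t.2 * g u.1 u.2) •
            (om t.2 u.1 • (zgen n t.1 * zgen n u.2) + om t.2 u.2 • (zgen n t.1 * zgen n u.1)
              + om t.1 u.1 • (zgen n u.2 * zgen n t.2)
              + om t.1 u.2 • (zgen n u.1 * zgen n t.2)) := by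
  have hmul : ∀ (h k : (Fin n ⊕ Fin n) → (Fin n ⊕ Fin n) → ℂ),
      Sf n h * Sf n k = ∑ t : (Fin n ⊕ Fin n) × (Fin n ⊕ Fin n),
        ∑ u : (Fin n ⊕ Fin n) × (Fin n ⊕ Fin n),
          (h t.1 t.2 * k u.1 u.2) • (Zq n t * Zq n u) := by
    intro h k
    rw [Sf, Sf, Finset.sum_mul_sum]
    refine Finset.sum_congr rfl fun t _ => Finset.sum_congr rfl fun u _ => ?_
    rw [smul_mul_assoc, mul_smul_comm, smul_smul]
  have hswap : ∑ t : (Fin n ⊕ Fin n) × (Fin n ⊕ Fin n),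
      ∑ u : (Fin n ⊕ Fin n) × (Fin n ⊕ Fin n),
        (g t.1 t.2 * f u.1 u.2) • (Zq n t * Zq n u)
      = ∑ t : (Fin n ⊕ Fin n) × (Fin n ⊕ Fin n),
        ∑ u : (Fin n ⊕ Fin n) × (Fin n ⊕ Fin n),
          (g u.1 u.2 * f t.1 t.2) • (Zq n u * Zq n t) := Finset.sum_comm
  rw [hmul f g, hmul g f, hswap, ← Finset.sum_sub_distrib]
  refine Finset.sum_congr rfl fun t _ => ?_
  rw [← Finset.sum_sub_distrib]
  refine Finset.sum_congr rfl fun u _ => ?_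
  rw [mul_comm (g u.1 u.2), ← comm_Z n t u]
  module

section contraction

variable (n : ℕ)

abbrev P (n : ℕ) := (Fin n ⊕ Fin n) × (Fin n ⊕ Fin n)

def e1 (n : ℕ) : (P n × P n) ≃ (P n × P n) where
  toFun w := ((w.1.1, w.2.2), (w.1.2, w.2.1))
  invFun v := ((v.1.1, v.2.1), (v.2.2, v.1.2))
  left_inv := fun ⟨⟨_,_⟩,⟨_,_⟩⟩ => rfl
  right_inv := fun ⟨⟨_,_⟩,⟨_,_⟩⟩ => rfl

def e2 (n : ℕ) : (P n × P n) ≃ (P n × P n) where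
  toFun w := ((w.1.1, w.2.1), (w.1.2, w.2.2))
  invFun v := ((v.1.1, v.2.1), (v.1.2, v.2.2))
  left_inv := fun ⟨⟨_,_⟩,⟨_,_⟩⟩ => rfl
  right_inv := fun ⟨⟨_,_⟩,⟨_,_⟩⟩ => rfl

def e3 (n : ℕ) : (P n × P n) ≃ (P n × P n) where
  toFun w := ((w.2.2, w.1.2), (w.1.1, w.2.1))
  invFun v := ((v.2.1, v.1.2), (v.2.2, v.1.1))
  left_inv := fun ⟨⟨_,_⟩,⟨_,_⟩⟩ => rfl
  right_inv := fun ⟨⟨_,_⟩,⟨_,_⟩⟩ => rfl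

def e4 (n : ℕ) : (P n × P n) ≃ (P n × P n) where
  toFun w := ((w.2.1, w.1.2), (w.1.1, w.2.2))
  invFun v := ((v.2.1, v.1.2), (v.1.1, v.2.2))
  left_inv := fun ⟨⟨_,_⟩,⟨_,_⟩⟩ => rfl
  right_inv := fun ⟨⟨_,_⟩,⟨_,_⟩⟩ => rfl

lemma Sf_bracket2 (f g : (Fin n ⊕ Fin n) → (Fin n ⊕ Fin n) → ℂ) :
    Sf n f * Sf n g - Sf n g * Sf n f
      = ∑ a : P n, (∑ b : P n,
          (f a.1 b.1 * g b.2 a.2 * om b.1 b.2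
            + f a.1 b.1 * g a.2 b.2 * om b.1 b.2
            + f b.1 a.2 * g b.2 a.1 * om b.1 b.2
            + f b.1 a.2 * g a.1 b.2 * om b.1 b.2)) • Zq n a := by
  rw [Sf_bracket]
  have hdist : ∀ (c s1 s2 s3 s4 : ℂ) (v1 v2 v3 v4 : Weyl n),
      c • (s1 • v1 + s2 • v2 + s3 • v3 + s4 • v4)
        = (c * s1) • v1 + (c * s2) • v2 + (c * s3) • v3 + (c * s4) • v4 := by
    intros; module
  simp only [hdist]
  simp only [Finset.sum_add_distrib]
  rw [← Fintype.sum_prod_type', ← Fintype.sum_prod_type', ← Fintype.sum_prod_type',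
    ← Fintype.sum_prod_type']
  have hT1 : ∑ w : P n × P n,
      (f w.1.1 w.1.2 * g w.2.1 w.2.2 * om w.1.2 w.2.1) • (zgen n w.1.1 * zgen n w.2.2)
      = ∑ a : P n, (∑ b : P n, f a.1 b.1 * g b.2 a.2 * om b.1 b.2) • Zq n a := by
    rw [Fintype.sum_equiv (e1 n)
      (fun w => (f w.1.1 w.1.2 * g w.2.1 w.2.2 * om w.1.2 w.2.1) • (zgen n w.1.1 * zgen n w.2.2))
      (fun v => (f v.1.1 v.2.1 * g v.2.2 v.1.2 * om v.2.1 v.2.2) • (zgen n v.1.1 * zgen n v.1.2))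
      (fun w => rfl)]
    rw [Fintype.sum_prod_type]
    exact Finset.sum_congr rfl fun a _ => by rw [Finset.sum_smul]; rfl
  have hT2 : ∑ w : P n × P n,
      (f w.1.1 w.1.2 * g w.2.1 w.2.2 * om w.1.2 w.2.2) • (zgen n w.1.1 * zgen n w.2.1)
      = ∑ a : P n, (∑ b : P n, f a.1 b.1 * g a.2 b.2 * om b.1 b.2) • Zq n a := by
    rw [Fintype.sum_equiv (e2 n)
      (fun w => (f w.1.1 w.1.2 * g w.2.1 w.2.2 * om w.1.2 w.2.2) • (zgen n w.1.1 * zgen n w.2.1))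
      (fun v => (f v.1.1 v.2.1 * g v.1.2 v.2.2 * om v.2.1 v.2.2) • (zgen n v.1.1 * zgen n v.1.2))
      (fun w => rfl)]
    rw [Fintype.sum_prod_type]
    exact Finset.sum_congr rfl fun a _ => by rw [Finset.sum_smul]; rfl
  have hT3 : ∑ w : P n × P n,
      (f w.1.1 w.1.2 * g w.2.1 w.2.2 * om w.1.1 w.2.1) • (zgen n w.2.2 * zgen n w.1.2)
      = ∑ a : P n, (∑ b : P n, f b.1 a.2 * g b.2 a.1 * om b.1 b.2) • Zq n a := by
    rw [Fintype.sum_equiv (e3 n)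
      (fun w => (f w.1.1 w.1.2 * g w.2.1 w.2.2 * om w.1.1 w.2.1) • (zgen n w.2.2 * zgen n w.1.2))
      (fun v => (f v.2.1 v.1.2 * g v.2.2 v.1.1 * om v.2.1 v.2.2) • (zgen n v.1.1 * zgen n v.1.2))
      (fun w => rfl)]
    rw [Fintype.sum_prod_type]
    exact Finset.sum_congr rfl fun a _ => by rw [Finset.sum_smul]; rfl
  have hT4 : ∑ w : P n × P n,
      (f w.1.1 w.1.2 * g w.2.1 w.2.2 * om w.1.1 w.2.2) • (zgen n w.2.1 * zgen n w.1.2)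
      = ∑ a : P n, (∑ b : P n, f b.1 a.2 * g a.1 b.2 * om b.1 b.2) • Zq n a := by
    rw [Fintype.sum_equiv (e4 n)
      (fun w => (f w.1.1 w.1.2 * g w.2.1 w.2.2 * om w.1.1 w.2.2) • (zgen n w.2.1 * zgen n w.1.2))
      (fun v => (f v.2.1 v.1.2 * g v.1.1 v.2.2 * om v.2.1 v.2.2) • (zgen n v.1.1 * zgen n v.1.2))
      (fun w => rfl)]
    rw [Fintype.sum_prod_type]
    exact Finset.sum_congr rfl fun a _ => by rw [Finset.sum_smul]; rfl
  rw [hT1, hT2, hT3, hT4]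
  rw [← Finset.sum_add_distrib, ← Finset.sum_add_distrib, ← Finset.sum_add_distrib]
  refine Finset.sum_congr rfl fun a _ => ?_
  rw [add_smul, add_smul, add_smul]

end contraction

def cm {n : ℕ} (M : Matrix (Fin n ⊕ Fin n) (Fin n ⊕ Fin n) ℂ) :
    (Fin n ⊕ Fin n) → (Fin n ⊕ Fin n) → ℂ
  | .inl i, .inl j => M (.inl i) (.inr j)
  | .inl i, .inr j => M (.inl i) (.inl j)
  | .inr i, .inl j => M (.inl j) (.inl i)
  | .inr i, .inr j => -(M (.inr i) (.inl j))

lemma neg_ite' (P : Prop) [Decidable P] (a b : ℂ) :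
    (-(if P then a else b)) = (if P then -a else -b) := by split <;> rfl

lemma key (n : ℕ) (M N : Matrix (Fin n ⊕ Fin n) (Fin n ⊕ Fin n) ℂ)
    (hM : inSp n M) (hN : inSp n N) (p q : Fin n ⊕ Fin n) :
    (2:ℂ) * cm (M * N - N * M) p q
      = ∑ b : P n, (cm M p b.1 * cm N b.2 q * om b.1 b.2
          + cm M p b.1 * cm N q b.2 * om b.1 b.2
          + cm M b.1 q * cm N b.2 p * om b.1 b.2
          + cm M b.1 q * cm N p b.2 * om b.1 b.2) := by
  obtain ⟨hM1, hM2, hM3⟩ := hM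
  obtain ⟨hN1, hN2, hN3⟩ := hN
  rw [Fintype.sum_prod_type]
  rcases p with i | i <;> rcases q with j | j
  all_goals
    simp only [Fintype.sum_sum_type, cm, om, mul_zero, zero_mul, mul_one, mul_neg, mul_ite,
      ite_mul, zero_add, add_zero, neg_ite', neg_neg, neg_zero, sub_zero,
      Finset.sum_add_distrib, Finset.sum_ite_eq,
      Finset.mem_univ, if_true, neg_mul, one_mul, Matrix.sub_apply, Matrix.mul_apply,
      Finset.sum_const_zero]
  all_goals rw [← sub_eq_zero]
  all_goals
    simp only [mul_neg, Finset.mul_sum, neg_neg, ← Finset.sum_neg_distrib,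
      ← Finset.sum_add_distrib, ← Finset.sum_sub_distrib]
  all_goals refine Finset.sum_eq_zero fun k _ => ?_
  · linear_combination (-(M (Sum.inl i) (Sum.inl k))) * hN2 j k
      + 2*M (Sum.inl i) (Sum.inr k) * hN1 k j
      - 2*N (Sum.inl i) (Sum.inr k) * hM1 k j
      - M (Sum.inl j) (Sum.inl k) * hN2 k i
  · linear_combination M (Sum.inl i) (Sum.inr k) * hN3 k j
      + M (Sum.inr k) (Sum.inl j) * hN2 k i
  · linear_combination 2*N (Sum.inr k) (Sum.inl i) * hM2 j k
      + 2*N (Sum.inl j) (Sum.inr k) * hM3 i k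
      - M (Sum.inr i) (Sum.inl k) * hN2 j k
      - M (Sum.inl k) (Sum.inr j) * hN3 i k
  · linear_combination (-2)*N (Sum.inr k) (Sum.inl j) * hM1 i k
      + 2*M (Sum.inr k) (Sum.inl j) * hN1 i k
      + M (Sum.inl k) (Sum.inl i) * hN3 k j
      + M (Sum.inl k) (Sum.inl j) * hN3 i k

lemma theta1_eq (n : ℕ) (M : Matrix (Fin n ⊕ Fin n) (Fin n ⊕ Fin n) ℂ) :
    theta1 n M = (1/2 : ℂ) • Sf n (cm M) := by
  rw [theta1, Sf]
  congr 1
  rw [Fintype.sum_prod_type]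
  simp only [Fintype.sum_sum_type, Zq, zgen, Sum.elim_inl, Sum.elim_inr, cm]
  have hyx : ∀ i j : Fin n, (M (Sum.inl j) (Sum.inl i)) • (wy n i * wx n j)
      = (M (Sum.inl j) (Sum.inl i)) • (wx n j * wy n i)
        + (if i = j then M (Sum.inl j) (Sum.inl i) else 0) • (1 : Weyl n) := by
    intro i j
    rw [rel_yx, smul_add, smul_smul]
    congr 2
    split <;> simp
  simp only [hyx]
  simp only [Finset.sum_add_distrib, Finset.sum_sub_distrib, two_mul, add_smul]
  have h1 : ∑ i : Fin n, ∑ j : Fin n,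
      (M (Sum.inl j) (Sum.inl i)) • (wx n j * wy n i)
      = ∑ i : Fin n, ∑ j : Fin n, (M (Sum.inl i) (Sum.inl j)) • (wx n i * wy n j) :=
    Finset.sum_comm
  have h2 : ∑ i : Fin n, ∑ j : Fin n,
      (if i = j then M (Sum.inl j) (Sum.inl i) else 0) • (1 : Weyl n)
      = (∑ i : Fin n, M (Sum.inl i) (Sum.inl i)) • (1 : Weyl n) := by
    rw [Finset.sum_smul]
    refine Finset.sum_congr rfl fun i _ => ?_
    rw [Finset.sum_eq_single i]
    · simp
    · intro j _ hj; simp [Ne.symm hj, hj]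
    · simp
  have h3 : ∑ x : Fin n, ∑ y : Fin n,
      (-(M (Sum.inr x) (Sum.inl y))) • (wy n x * wy n y)
      = - ∑ x : Fin n, ∑ y : Fin n, (M (Sum.inr x) (Sum.inl y)) • (wy n x * wy n y) := by
    simp only [← Finset.sum_neg_distrib]
    exact Finset.sum_congr rfl fun x _ => Finset.sum_congr rfl fun y _ => by module
  rw [h1, h2, h3]
  abel

/-- `Θ₁` is a Lie algebra homomorphism from `sp₂ₙ(ℂ)` (with the matrix
commutator) to the Weyl algebra `W₂ₙ` (with the commutator bracket). -/
theorem stmt7 (n : ℕ) :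
    (∀ M N, inSp n M → inSp n N → theta1 n (M + N) = theta1 n M + theta1 n N) ∧
    (∀ (c : ℂ) M, inSp n M → theta1 n (c • M) = c • theta1 n M) ∧
    (∀ M N, inSp n M → inSp n N →
      theta1 n (M * N - N * M)
        = theta1 n M * theta1 n N - theta1 n N * theta1 n M) := by
  refine ⟨?_, ?_, ?_⟩
  · intro M N _ _
    rw [theta1_eq, theta1_eq, theta1_eq, Sf, Sf, Sf, ← smul_add, ← Finset.sum_add_distrib]
    congr 1
    refine Finset.sum_congr rfl fun t _ => ?_
    have hadd : cm (M + N) t.1 t.2 = cm M t.1 t.2 + cm N t.1 t.2 := by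
      rcases t with ⟨p, q⟩
      rcases p with i | i <;> rcases q with j | j <;> simp [cm, Matrix.add_apply] <;> ring
    rw [hadd, add_smul]
  · intro c M _
    rw [theta1_eq, theta1_eq, Sf, Sf]
    have hmulc : ∀ t : P n, cm (c • M) t.1 t.2 • Zq n t = c • (cm M t.1 t.2 • Zq n t) := by
      intro t
      have hsm : cm (c • M) t.1 t.2 = c * cm M t.1 t.2 := by
        rcases t with ⟨p, q⟩
        rcases p with i | i <;> rcases q with j | j <;> simp [cm, Matrix.smul_apply] <;> ring
      rw [hsm, smul_smul]
    rw [Finset.sum_congr rfl fun t _ => hmulc t, ← Finset.smul_sum, smul_comm]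
  · intro M N hM hN
    rw [theta1_eq, theta1_eq, theta1_eq]
    have hscal : ∀ x y : Weyl n, ((1/2:ℂ) • x) * ((1/2:ℂ) • y) = (1/4:ℂ) • (x * y) := by
      intro x y
      rw [smul_mul_assoc, mul_smul_comm, smul_smul]
      norm_num
    rw [hscal, hscal]
    have hsub : ∀ x y : Weyl n, (1/4:ℂ) • x - (1/4:ℂ) • y = (1/4:ℂ) • (x - y) := by
      intro x y; module
    rw [hsub, Sf_bracket2, Sf, Finset.smul_sum, Finset.smul_sum]
    refine Finset.sum_congr rfl fun a _ => ?_
    rw [smul_smul, smul_smul]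
    have hsc : (1/2:ℂ) * cm (M * N - N * M) a.1 a.2
        = (1/4:ℂ) * (∑ b : P n, (cm M a.1 b.1 * cm N b.2 a.2 * om b.1 b.2
            + cm M a.1 b.1 * cm N a.2 b.2 * om b.1 b.2
            + cm M b.1 a.2 * cm N b.2 a.1 * om b.1 b.2
            + cm M b.1 a.2 * cm N a.1 b.2 * om b.1 b.2)) := by
      linear_combination (1/4:ℂ) * key n M N hM hN a.1 a.2
    rw [hsc]
end
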